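/- arXiv:2401.12057 — 6 statements merged into one kernel-verified Lean document; each statement's English description precedes it below -/
import Mathlib

section
/- For α > -1 and integer l ≥ 1, the functions F₁(r) = ((l/(1+α)+1)·r^l + (l/(1+α)-1)·r^{l+2(1+α)})/(1 + r^{2(1+α)}) and F₂(r) = ((l/(1+α)+1)·r^{-l+2(1+α)} + (l/(1+α)-1)·r^{-l})/(1 + r^{2(1+α)}) both solve the ODE φ''(r) + (1/r)·φ'(r) + (8(1+α)²·r^{2α}·e^{U_α(r)} - l²/r²)·φ(r) = 0 on (0,∞), where U_α(r) = -2·log(1 + r^{2α+2}). -/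
/-!
With the Euler operator `θ = r d/dr` one has `r² (φ'' + φ'/r) = θ² φ`, and `θ` acts on
`r ^ a * k (r ^ c)` as `r ^ a * (a k + c t k')` at `t = r ^ c`. Writing `F₁ = r ^ l h(r ^ (2(1+α)))`
with `h` a Möbius function, the equation thus becomes a rational identity in `t`. Since
`F₂` is `-F₁` with `l` replaced by `-l`, and the equation only sees `l²`, it solves it as well.
-/

open Real Filter Topology

noncomputable def bubbleKernel (α l r : ℝ) : ℝ :=
  ((l / (1 + α) + 1) * r ^ l + (l / (1 + α) - 1) * r ^ (l + 2 * (1 + α))) / (1 + r ^ (2 * (1 + α)))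

lemma hasDerivAt_rpow_mul_comp_rpow (a c : ℝ) {k : ℝ → ℝ} {k' r : ℝ} (hr : 0 < r)
    (hk : HasDerivAt k k' (r ^ c)) :
    HasDerivAt (fun x => x ^ a * k (x ^ c)) (r ^ a * (a * k (r ^ c) + c * r ^ c * k') / r) r := by
  have hpow : ∀ p : ℝ, HasDerivAt (fun x : ℝ => x ^ p) (p * r ^ p / r) r := fun p => by
    simpa [rpow_sub_one hr.ne', mul_div_assoc] using hasDerivAt_rpow_const (p := p) (Or.inl hr.ne')
  exact ((hpow a).mul (hk.comp r (hpow c))).congr_deriv (by simp only [Function.comp_apply]; ring)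

lemma deriv_deriv_add_one_div_mul_deriv {f g : ℝ → ℝ} {h r : ℝ}
    (hf : ∀ x, 0 < x → HasDerivAt f (g x / x) x) (hg : HasDerivAt g (h / r) r) (hr : 0 < r) :
    deriv (deriv f) r + 1 / r * deriv f r = h / r ^ 2 := by
  have hdf : deriv f =ᶠ[𝓝 r] fun x => g x / x := by
    filter_upwards [isOpen_Ioi.mem_nhds hr] with x hx using (hf x hx).deriv
  rw [hdf.deriv_eq, (hg.fun_div (hasDerivAt_id' r) hr.ne').deriv, (hf r hr).deriv]
  field_simp
  ring

lemma hasDerivAt_affine_div_one_add (A B : ℝ) {t : ℝ} (ht : 1 + t ≠ 0) :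
    HasDerivAt (fun t => (A + B * t) / (1 + t)) ((B - A) / (1 + t) ^ 2) t := by
  have := (((hasDerivAt_id' t).const_mul B).const_add A).fun_div ((hasDerivAt_id' t).const_add 1) ht
  exact this.congr_deriv (by ring)

lemma hasDerivAt_id_div_one_add_sq {t : ℝ} (ht : 1 + t ≠ 0) :
    HasDerivAt (fun t => t / (1 + t) ^ 2) ((1 - t) / (1 + t) ^ 3) t := by
  have := (hasDerivAt_id' t).fun_div (((hasDerivAt_id' t).const_add 1).fun_pow 2) (pow_ne_zero 2 ht)
  exact this.congr_deriv (by field_simp; ring)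

lemma bubbleKernel_eq_rpow_mul (α l : ℝ) {x : ℝ} (hx : 0 < x) :
    bubbleKernel α l x = x ^ l * (((l / (1 + α) + 1) + (l / (1 + α) - 1) * x ^ (2 * (1 + α)))
      / (1 + x ^ (2 * (1 + α)))) := by
  rw [bubbleKernel, rpow_add hx]
  ring

theorem bubbleKernel_solves (α l : ℝ) (hα : 1 + α ≠ 0) {r : ℝ} (hr : 0 < r) :
    deriv (deriv (bubbleKernel α l)) r + 1 / r * deriv (bubbleKernel α l) r
      + (8 * (1 + α) ^ 2 * r ^ (2 * α) / (1 + r ^ (2 * (1 + α))) ^ 2 - l ^ 2 / r ^ 2)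
        * bubbleKernel α l r = 0 := by
  set A := l / (1 + α) + 1
  set B := l / (1 + α) - 1
  set h : ℝ → ℝ := fun t => (A + B * t) / (1 + t)
  set k : ℝ → ℝ := fun t => l * h t + 2 * (1 + α) * (B - A) * (t / (1 + t) ^ 2)
  have hden : ∀ x : ℝ, 0 < x → 1 + x ^ (2 * (1 + α)) ≠ 0 := fun x hx => by positivity
  have hF : ∀ x, 0 < x → HasDerivAt (bubbleKernel α l) (x ^ l * k (x ^ (2 * (1 + α))) / x) x := by
    intro x hx
    have hfac : bubbleKernel α l =ᶠ[𝓝 x] fun y => y ^ l * h (y ^ (2 * (1 + α))) := by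
      filter_upwards [isOpen_Ioi.mem_nhds hx] with y hy using bubbleKernel_eq_rpow_mul α l hy
    refine ((hasDerivAt_rpow_mul_comp_rpow l (2 * (1 + α)) hx
      (hasDerivAt_affine_div_one_add A B (hden x hx))).congr_of_eventuallyEq hfac).congr_deriv ?_
    ring
  have hk := ((hasDerivAt_affine_div_one_add A B (hden r hr)).const_mul l).add
    ((hasDerivAt_id_div_one_add_sq (hden r hr)).const_mul (2 * (1 + α) * (B - A)))
  rw [deriv_deriv_add_one_div_mul_deriv hF (hasDerivAt_rpow_mul_comp_rpow l (2 * (1 + α)) hr hk) hr,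
    bubbleKernel_eq_rpow_mul α l hr, show 2 * α = 2 * (1 + α) - 2 by ring, rpow_sub hr, rpow_two]
  have hQ := hden r hr
  simp only [h, k, A, B]
  generalize r ^ (2 * (1 + α)) = Q at hQ ⊢
  field_simp
  ring

theorem stmt2_general (α : ℝ) (hα : -1 < α) (l : ℕ)
    (F₁ F₂ U : ℝ → ℝ)
    (hF₁ : ∀ r, F₁ r = (((l : ℝ) / (1 + α) + 1) * r ^ (l : ℝ)
        + ((l : ℝ) / (1 + α) - 1) * r ^ ((l : ℝ) + 2 * (1 + α))) / (1 + r ^ (2 * (1 + α))))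
    (hF₂ : ∀ r, F₂ r = (((l : ℝ) / (1 + α) + 1) * r ^ (-(l : ℝ) + 2 * (1 + α))
        + ((l : ℝ) / (1 + α) - 1) * r ^ (-(l : ℝ))) / (1 + r ^ (2 * (1 + α))))
    (hU : ∀ r, U r = -2 * Real.log (1 + r ^ (2 * α + 2))) :
    ∀ r : ℝ, 0 < r →
      (deriv (deriv F₁) r + (1 / r) * deriv F₁ r
        + (8 * (1 + α) ^ 2 * r ^ (2 * α) * Real.exp (U r) - (l : ℝ) ^ 2 / r ^ 2) * F₁ r = 0) ∧
      (deriv (deriv F₂) r + (1 / r) * deriv F₂ r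
        + (8 * (1 + α) ^ 2 * r ^ (2 * α) * Real.exp (U r) - (l : ℝ) ^ 2 / r ^ 2) * F₂ r = 0) := by
  intro r hr
  have hκ : 1 + α ≠ 0 := by linarith
  have hexp : exp (U r) = ((1 + r ^ (2 * (1 + α))) ^ 2)⁻¹ := by
    rw [hU, show 2 * α + 2 = 2 * (1 + α) by ring, mul_comm, ← rpow_def_of_pos (by positivity),
      rpow_neg (by positivity), rpow_two]
  have h₁ : F₁ = bubbleKernel α l := funext hF₁
  have h₂ : F₂ = -bubbleKernel α (-l) := funext fun x => by
    rw [hF₂, Pi.neg_apply, bubbleKernel]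
    ring
  rw [h₁, h₂, deriv.neg', deriv.fun_neg, Pi.neg_apply, hexp]
  exact ⟨by linear_combination bubbleKernel_solves α l hκ hr,
    by linear_combination -bubbleKernel_solves α (-l) hκ hr⟩

theorem stmt2 (α : ℝ) (hα : -1 < α) (l : ℕ) (hl : 1 ≤ l)
    (F₁ F₂ U : ℝ → ℝ)
    (hF₁ : ∀ r, F₁ r = (((l : ℝ) / (1 + α) + 1) * r ^ (l : ℝ)
        + ((l : ℝ) / (1 + α) - 1) * r ^ ((l : ℝ) + 2 * (1 + α))) / (1 + r ^ (2 * (1 + α))))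
    (hF₂ : ∀ r, F₂ r = (((l : ℝ) / (1 + α) + 1) * r ^ (-(l : ℝ) + 2 * (1 + α))
        + ((l : ℝ) / (1 + α) - 1) * r ^ (-(l : ℝ))) / (1 + r ^ (2 * (1 + α))))
    (hU : ∀ r, U r = -2 * Real.log (1 + r ^ (2 * α + 2))) :
    ∀ r : ℝ, 0 < r →
      (deriv (deriv F₁) r + (1 / r) * deriv F₁ r
        + (8 * (1 + α) ^ 2 * r ^ (2 * α) * Real.exp (U r) - (l : ℝ) ^ 2 / r ^ 2) * F₁ r = 0) ∧
      (deriv (deriv F₂) r + (1 / r) * deriv F₂ r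
        + (8 * (1 + α) ^ 2 * r ^ (2 * α) * Real.exp (U r) - (l : ℝ) ^ 2 / r ^ 2) * F₂ r = 0) :=
  stmt2_general α hα l F₁ F₂ U hF₁ hF₂ hU
end

section
/- For every α > 0 with α ∉ ℕ, the identity ∫₀^∞ s^{2α+3}·e^{U(s)}·(1 - s^{2α+2})·((2+α)/α - s^{2α+2})²/(1+s^{2α+2})³ ds = 0 holds, where U(s) = -2·log(1 + s^{2α+2}); i.e., ∫₀^∞ s^{2α+3}·(1-s^{2α+2})·((2+α)/α - s^{2α+2})²/(1+s^{2α+2})⁵ ds = 0. -/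
/-!
Write `u = s ^ (2α + 2)`, so that the integrand is `s * h(u)` with
`h(u) = u (1 - u) ((2 + α)/α - u)² / (1 + u)⁵`. The rational function
`G(u) = ((α + 2)/(2α²) u + u³/(2α)) / (1 + u)⁴` solves `2 G + (2α + 2) u G' = h`,
which makes `F(s) = s² G(s ^ (2α + 2))` a primitive of the integrand. Since `F(0) = 0` and
`F(s) = O(s^(-2α))` at infinity, the integral is `0`; it converges because
`|h(u)| ≤ ((2 + α)/α)² / u`.
-/

open Real MeasureTheory Set Filter Topology Asymptotics

theorem hasDerivAt_sq_mul_comp_rpow {G : ℝ → ℝ} {G' p s : ℝ} (hs : 0 < s)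
    (hG : HasDerivAt G G' (s ^ p)) :
    HasDerivAt (fun x => x ^ 2 * G (x ^ p)) (s * (2 * G (s ^ p) + p * s ^ p * G')) s := by
  refine ((hasDerivAt_pow 2 s).mul
    (hG.comp s (hasDerivAt_rpow_const (Or.inl hs.ne')))).congr_deriv ?_
  rw [rpow_sub_one hs.ne', Function.comp_apply]
  field_simp
  ring

namespace Ident1

noncomputable def integrand (α u : ℝ) : ℝ :=
  u * (1 - u) * ((2 + α) / α - u) ^ 2 / (1 + u) ^ 5

noncomputable def primitive (α u : ℝ) : ℝ :=
  ((α + 2) / (2 * α ^ 2) * u + u ^ 3 / (2 * α)) / (1 + u) ^ 4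

variable {α u : ℝ}

theorem hasDerivAt_primitive (hα : 0 < α) (hu : 0 < u) :
    HasDerivAt (primitive α) ((integrand α u - 2 * primitive α u) / ((2 * α + 2) * u)) u := by
  have hnum : HasDerivAt (fun x => (α + 2) / (2 * α ^ 2) * x + x ^ 3 / (2 * α))
      ((α + 2) / (2 * α ^ 2) + 3 * u ^ 2 / (2 * α)) u := by
    refine (((hasDerivAt_id' u).const_mul ((α + 2) / (2 * α ^ 2))).add
      ((hasDerivAt_pow 3 u).div_const (2 * α))).congr_deriv ?_
    push_cast; ring
  have hden : HasDerivAt (fun x => (1 + x) ^ 4) (4 * (1 + u) ^ 3) u := by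
    refine (((hasDerivAt_id' u).const_add 1).pow 4).congr_deriv ?_
    push_cast; ring
  refine (hnum.div hden (by positivity)).congr_deriv ?_
  unfold integrand primitive
  field_simp
  ring

theorem continuousOn_integrand : ContinuousOn (integrand α) (Ici 0) := by
  unfold integrand
  exact ContinuousOn.div (by fun_prop) (by fun_prop) fun u (hu : 0 ≤ u) => by positivity

theorem continuousOn_primitive : ContinuousOn (primitive α) (Ici 0) := by
  unfold primitive
  exact ContinuousOn.div (by fun_prop) (by fun_prop) fun u (hu : 0 ≤ u) => by positivity

theorem abs_integrand_le (hα : 0 < α) (hu : 0 < u) :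
    |integrand α u| ≤ ((2 + α) / α) ^ 2 / u := by
  set c := (2 + α) / α
  have hc : 1 ≤ c := by rw [le_div_iff₀ hα]; linarith
  have h1 : |1 - u| ≤ 1 + u := abs_le.2 ⟨by linarith, by linarith⟩
  have h2 : |c - u| ≤ c * (1 + u) := abs_le.2 ⟨by nlinarith, by nlinarith⟩
  calc |integrand α u| = u * |1 - u| * |c - u| ^ 2 / (1 + u) ^ 5 := by
        simp [integrand, abs_div, abs_mul, abs_of_pos hu, sq_abs, c,
          abs_of_pos (by positivity : (0 : ℝ) < (1 + u) ^ 5)]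
    _ ≤ u * (1 + u) * (c * (1 + u)) ^ 2 / (1 + u) ^ 5 := by gcongr
    _ = c ^ 2 * (u / (1 + u) ^ 2) := by field_simp
    _ ≤ c ^ 2 * (1 / u) := by
        refine mul_le_mul_of_nonneg_left ?_ (sq_nonneg c)
        rw [div_le_div_iff₀ (by positivity) hu]; nlinarith
    _ = c ^ 2 / u := by ring

theorem primitive_nonneg (hα : 0 < α) (hu : 0 ≤ u) : 0 ≤ primitive α u := by
  unfold primitive; positivity

theorem primitive_le (hα : 0 < α) (hu : 0 < u) :
    primitive α u ≤ ((α + 2) / (2 * α ^ 2) + 1 / (2 * α)) / u := by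
  have h2 : u ^ 2 ≤ (1 + u) ^ 4 := by nlinarith
  have h4 : u ^ 4 ≤ (1 + u) ^ 4 := pow_le_pow_left₀ hu.le (by linarith) 4
  rw [primitive, div_le_div_iff₀ (by positivity) hu]
  calc _ = (α + 2) / (2 * α ^ 2) * u ^ 2 + 1 / (2 * α) * u ^ 4 := by ring
    _ ≤ (α + 2) / (2 * α ^ 2) * (1 + u) ^ 4 + 1 / (2 * α) * (1 + u) ^ 4 := by gcongr
    _ = _ := by ring

theorem hasDerivAt_sq_mul_primitive_rpow (hα : 0 < α) {s : ℝ} (hs : 0 < s) :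
    HasDerivAt (fun x => x ^ 2 * primitive α (x ^ (2 * α + 2)))
      (s * integrand α (s ^ (2 * α + 2))) s := by
  have hu : 0 < s ^ (2 * α + 2) := rpow_pos_of_pos hs _
  refine (hasDerivAt_sq_mul_comp_rpow hs (hasDerivAt_primitive hα hu)).congr_deriv ?_
  field_simp
  ring

theorem continuousOn_sq_mul_primitive_rpow (hα : 0 < α) :
    ContinuousOn (fun x => x ^ 2 * primitive α (x ^ (2 * α + 2))) (Ici 0) :=
  (continuous_pow 2).continuousOn.mul <| continuousOn_primitive.comp
    (continuous_rpow_const (by positivity)).continuousOn fun x (hx : 0 ≤ x) => by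
      simp only [mem_Ici]; positivity

theorem tendsto_sq_mul_primitive_rpow_atTop (hα : 0 < α) :
    Tendsto (fun x => x ^ 2 * primitive α (x ^ (2 * α + 2))) atTop (𝓝 0) := by
  set C := (α + 2) / (2 * α ^ 2) + 1 / (2 * α)
  have hC : Tendsto (fun x : ℝ => C * x ^ (-(2 * α))) atTop (𝓝 0) := by
    simpa using (tendsto_rpow_neg_atTop (by positivity : 0 < 2 * α)).const_mul C
  refine tendsto_of_tendsto_of_tendsto_of_le_of_le' tendsto_const_nhds hC ?_ ?_
  · filter_upwards [eventually_ge_atTop 0] with x hx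
    exact mul_nonneg (sq_nonneg x) (primitive_nonneg hα (by positivity))
  · filter_upwards [eventually_gt_atTop 0] with x hx
    calc x ^ 2 * primitive α (x ^ (2 * α + 2)) ≤ x ^ 2 * (C / x ^ (2 * α + 2)) :=
          mul_le_mul_of_nonneg_left (primitive_le hα (by positivity)) (sq_nonneg x)
      _ = C * x ^ (-(2 * α)) := by
          rw [show -(2 * α) = 2 - (2 * α + 2) by ring, rpow_sub hx, rpow_two]
          ring

theorem integrableOn_Ioi_mul_integrand_rpow (hα : 0 < α) :
    IntegrableOn (fun x => x * integrand α (x ^ (2 * α + 2))) (Ioi 0) := by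
  have hloc : LocallyIntegrableOn (fun x => x * integrand α (x ^ (2 * α + 2))) (Ici 0) :=
    (continuousOn_id.mul <| continuousOn_integrand.comp
      (continuous_rpow_const (by positivity)).continuousOn fun x (hx : 0 ≤ x) => by
        simp only [mem_Ici]; positivity).locallyIntegrableOn measurableSet_Ici
  have hO : (fun x => x * integrand α (x ^ (2 * α + 2))) =O[atTop]
      fun x => x ^ (-(2 * α + 1)) := by
    refine IsBigO.of_bound (((2 + α) / α) ^ 2) ?_
    filter_upwards [eventually_gt_atTop 0] with x hx
    have hu : 0 < x ^ (2 * α + 2) := rpow_pos_of_pos hx _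
    calc ‖x * integrand α (x ^ (2 * α + 2))‖ = x * |integrand α (x ^ (2 * α + 2))| := by
          rw [norm_mul, Real.norm_of_nonneg hx.le, Real.norm_eq_abs]
      _ ≤ x * (((2 + α) / α) ^ 2 / x ^ (2 * α + 2)) :=
          mul_le_mul_of_nonneg_left (abs_integrand_le hα hu) hx.le
      _ = ((2 + α) / α) ^ 2 * ‖x ^ (-(2 * α + 1))‖ := by
          rw [Real.norm_of_nonneg (rpow_nonneg hx.le _),
            show -(2 * α + 1) = 1 - (2 * α + 2) by ring, rpow_sub hx, rpow_one]
          ring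
  exact (hloc.integrableOn_of_isBigO_atTop hO
    (integrableAtFilter_rpow_atTop_iff.2 (by linarith))).mono_set Ioi_subset_Ici_self

end Ident1

theorem stmt5_general (α : ℝ) (hα : 0 < α) :
    ∫ s in Set.Ioi (0 : ℝ),
      s ^ (2 * α + 3) * (1 - s ^ (2 * α + 2)) * ((2 + α) / α - s ^ (2 * α + 2)) ^ 2
        / (1 + s ^ (2 * α + 2)) ^ 5 = 0 := by
  have hintegrand : EqOn (fun s => s ^ (2 * α + 3) * (1 - s ^ (2 * α + 2))
      * ((2 + α) / α - s ^ (2 * α + 2)) ^ 2 / (1 + s ^ (2 * α + 2)) ^ 5)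
      (fun s => s * Ident1.integrand α (s ^ (2 * α + 2))) (Ioi 0) := fun s (hs : 0 < s) => by
    simp only [Ident1.integrand]
    rw [show 2 * α + 3 = 2 * α + 2 + 1 by ring, rpow_add_one hs.ne']
    ring
  rw [setIntegral_congr_fun measurableSet_Ioi hintegrand,
    integral_Ioi_of_hasDerivAt_of_tendsto
      ((Ident1.continuousOn_sq_mul_primitive_rpow hα) 0 self_mem_Ici)
      (fun s hs => Ident1.hasDerivAt_sq_mul_primitive_rpow hα hs)
      (Ident1.integrableOn_Ioi_mul_integrand_rpow hα)
      (Ident1.tendsto_sq_mul_primitive_rpow_atTop hα)]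
  simp

theorem stmt5 (α : ℝ) (hα : 0 < α) (hαn : ∀ n : ℕ, α ≠ n) :
    ∫ s in Set.Ioi (0 : ℝ),
      s ^ (2 * α + 3) * (1 - s ^ (2 * α + 2)) * ((2 + α) / α - s ^ (2 * α + 2)) ^ 2
        / (1 + s ^ (2 * α + 2)) ^ 5 = 0 :=
  stmt5_general α hα
end

section
/- Let α > -1 with α ≠ 0, h₀ > 0, a = h₀/(8(1+α)²), ε > 0, and v = (v₁,v₂) ∈ ℝ². Define c₁(y) = ε·g(|y|)·(v·y/|y|) for y ≠ 0, where g(r) = -(2(1+α)/α)·r/(1 + a·r^{2α+2}). Then c₁ extends continuously by c₁(0)=0 and satisfies Δc₁ + |y|^{2α}·h₀·e^{U(y)}·c₁ = -ε·(v·y)·h₀·|y|^{2α}·e^{U(y)} in ℝ² \ {0}, where U(y) = -2·log(1 + a·|y|^{2α+2}). -/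
/-!
Write `P(t) = 1 + a t^(α+1)` (`bubbleDenom a α`), so that `e^U = P(|y|²)⁻²`. Then
`c₁(y) = ⟪w, y⟫ / P(|y|²)` for all `y`, including `0`, with `w = -ε (2(1+α)/α) v`; this is
continuous because `α + 1 > 0`. In `ℝⁿ` the Laplacian of a
function `⟪w, y⟫ φ(|y|²)` is `⟪w, y⟫ ((2n+4) φ'(t) + 4 t φ''(t))` with `t = |y|²`, so the PDE reduces
to a second-order ODE identity for `φ = 1/P` in dimension `n = 2`; it is this identity that forces
`a = h₀/(8(1+α)²)` and the factor `2(1+α)/α`.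
-/

open Real

noncomputable def lap (f : EuclideanSpace ℝ (Fin 2) → ℝ) (x : EuclideanSpace ℝ (Fin 2)) : ℝ :=
  ∑ i : Fin 2, iteratedFDeriv ℝ 2 f x ![EuclideanSpace.single i 1, EuclideanSpace.single i 1]

open Filter Topology InnerProductSpace Laplacian
open scoped RealInnerProductSpace

section InnerProductSpace

variable {E : Type*} [NormedAddCommGroup E] [InnerProductSpace ℝ E]

theorem hasFDerivAt_inner_mul_comp_normSq (v : E) {φ : ℝ → ℝ} {φ' : ℝ} {y : E}
    (hφ : HasDerivAt φ φ' (‖y‖ ^ 2)) :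
    HasFDerivAt (fun z => ⟪v, z⟫ * φ (‖z‖ ^ 2))
      (φ (‖y‖ ^ 2) • innerSL ℝ v + (2 * ⟪v, y⟫ * φ') • innerSL ℝ y) y := by
  have h : HasFDerivAt (fun z => ⟪v, z⟫ * φ (‖z‖ ^ 2)) _ y :=
    ((innerSL ℝ v).hasFDerivAt (x := y)).mul
      (hφ.comp_hasFDerivAt y (hasStrictFDerivAt_norm_sq y).hasFDerivAt)
  exact h.congr_fderiv (by ext u; simp; ring)

theorem fderiv_fderiv_inner_mul_comp_normSq_apply_self (v : E) {φ φ' : ℝ → ℝ} {φ'' : ℝ}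
    {y : E} (hφ : ∀ᶠ t in 𝓝 (‖y‖ ^ 2), HasDerivAt φ (φ' t) t)
    (hφ' : HasDerivAt φ' φ'' (‖y‖ ^ 2)) (u : E) :
    fderiv ℝ (fderiv ℝ fun z => ⟪v, z⟫ * φ (‖z‖ ^ 2)) y u u
      = 4 * φ' (‖y‖ ^ 2) * (⟪y, u⟫ * ⟪u, v⟫) + 2 * ⟪v, y⟫ * φ' (‖y‖ ^ 2) * ‖u‖ ^ 2
        + 4 * ⟪v, y⟫ * φ'' * (⟪y, u⟫ * ⟪u, y⟫) := by
  have hnormSq (z : E) : HasFDerivAt (fun z : E => ‖z‖ ^ 2) (2 • innerSL ℝ z) z :=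
    (hasStrictFDerivAt_norm_sq z).hasFDerivAt
  -- over `ℝ` the map `innerSL ℝ` is linear, and this ascription lets us differentiate it
  have hinner (z w : E) : (innerSL ℝ : E →L[ℝ] E →L[ℝ] ℝ) z w = ⟪z, w⟫ := rfl
  have hfderiv : fderiv ℝ (fun z => ⟪v, z⟫ * φ (‖z‖ ^ 2)) =ᶠ[𝓝 y]
      fun z => φ (‖z‖ ^ 2) • innerSL ℝ v
        + (2 * ⟪v, z⟫ * φ' (‖z‖ ^ 2)) • (innerSL ℝ : E →L[ℝ] E →L[ℝ] ℝ) z := by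
    filter_upwards [((continuous_norm.pow 2).tendsto y).eventually hφ] with z hz
    exact (hasFDerivAt_inner_mul_comp_normSq v hz).fderiv
  have h : HasFDerivAt (fun z => φ (‖z‖ ^ 2) • innerSL ℝ v
      + (2 * ⟪v, z⟫ * φ' (‖z‖ ^ 2)) • (innerSL ℝ : E →L[ℝ] E →L[ℝ] ℝ) z) _ y :=
    ((hφ.self_of_nhds.comp_hasFDerivAt y (hnormSq y)).smul
        (hasFDerivAt_const (innerSL ℝ v : E →L[ℝ] ℝ) y)).add
      ((((innerSL ℝ v).hasFDerivAt.const_mul 2).mul (hφ'.comp_hasFDerivAt y (hnormSq y))).smul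
        (innerSL ℝ : E →L[ℝ] E →L[ℝ] ℝ).hasFDerivAt)
  rw [hfderiv.fderiv_eq, h.fderiv]
  simp [hinner, real_inner_comm u]
  ring

theorem laplacian_inner_mul_comp_normSq [FiniteDimensional ℝ E] (v : E) {φ φ' : ℝ → ℝ}
    {φ'' : ℝ} {y : E} (hφ : ∀ᶠ t in 𝓝 (‖y‖ ^ 2), HasDerivAt φ (φ' t) t)
    (hφ' : HasDerivAt φ' φ'' (‖y‖ ^ 2)) :
    Δ (fun z => ⟪v, z⟫ * φ (‖z‖ ^ 2)) y
      = ⟪v, y⟫ * ((2 * Module.finrank ℝ E + 4) * φ' (‖y‖ ^ 2) + 4 * ‖y‖ ^ 2 * φ'') := by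
  set b := stdOrthonormalBasis ℝ E
  rw [laplacian_eq_iteratedFDeriv_orthonormalBasis _ b]
  simp only [iteratedFDeriv_two_apply, Matrix.cons_val_zero, Matrix.cons_val_one,
    fderiv_fderiv_inner_mul_comp_normSq_apply_self v hφ hφ', Finset.sum_add_distrib,
    ← Finset.mul_sum, b.sum_inner_mul_inner, b.norm_eq_one, one_pow, Finset.sum_const,
    Finset.card_univ, Fintype.card_fin, nsmul_eq_mul, mul_one]
  rw [real_inner_comm y v, real_inner_self_eq_norm_sq]
  ring

end InnerProductSpace

theorem lap_eq_laplacian (f : EuclideanSpace ℝ (Fin 2) → ℝ) : lap f = Δ f := by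
  rw [laplacian_eq_iteratedFDeriv_orthonormalBasis f (EuclideanSpace.basisFun (Fin 2) ℝ)]
  ext x
  simp [lap, EuclideanSpace.basisFun_apply]

theorem sq_rpow {r : ℝ} (hr : 0 ≤ r) (p : ℝ) : (r ^ 2) ^ p = r ^ (2 * p) := by
  exact_mod_cast (rpow_natCast_mul hr 2 p).symm

theorem exp_neg_two_mul_log {x : ℝ} (hx : 0 < x) : exp (-2 * log x) = x⁻¹ ^ 2 := by
  rw [← exp_log (pow_pos (inv_pos.mpr hx) 2), log_pow, log_inv]
  ring_nf

noncomputable def bubbleDenom (a α t : ℝ) : ℝ := 1 + a * t ^ (α + 1)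

noncomputable def bubbleDenomInvDeriv (a α t : ℝ) : ℝ :=
  -(a * (α + 1) * t ^ α) / bubbleDenom a α t ^ 2

noncomputable def bubbleDenomInvDeriv2 (a α t : ℝ) : ℝ :=
  -(a * (α + 1) * t ^ (α - 1) * (α * bubbleDenom a α t - 2 * a * (α + 1) * t ^ (α + 1)))
    / bubbleDenom a α t ^ 3

noncomputable def gradientMode {E : Type*} [NormedAddCommGroup E] [InnerProductSpace ℝ E]
    (a α : ℝ) (w z : E) : ℝ :=
  ⟪w, z⟫ * (bubbleDenom a α (‖z‖ ^ 2))⁻¹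

section BubbleDenom

variable {a α t : ℝ}

theorem bubbleDenom_pos (ha : 0 ≤ a) (ht : 0 ≤ t) : 0 < bubbleDenom a α t := by
  have := mul_nonneg ha (rpow_nonneg ht (α + 1))
  unfold bubbleDenom
  linarith

theorem continuous_bubbleDenom (hα : -1 ≤ α) : Continuous (bubbleDenom a α) :=
  continuous_const.add (continuous_const.mul (continuous_rpow_const (by linarith)))

theorem hasDerivAt_bubbleDenom (ht : 0 < t) :
    HasDerivAt (bubbleDenom a α) (a * (α + 1) * t ^ α) t := by
  have h := ((hasDerivAt_rpow_const (p := α + 1) (Or.inl ht.ne')).const_mul a).const_add 1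
  rwa [add_sub_cancel_right, ← mul_assoc] at h

theorem hasDerivAt_inv_bubbleDenom (ha : 0 ≤ a) (ht : 0 < t) :
    HasDerivAt (fun s => (bubbleDenom a α s)⁻¹) (bubbleDenomInvDeriv a α t) t :=
  (hasDerivAt_bubbleDenom ht).inv (bubbleDenom_pos ha ht.le).ne'

theorem hasDerivAt_bubbleDenomInvDeriv (ha : 0 ≤ a) (ht : 0 < t) :
    HasDerivAt (bubbleDenomInvDeriv a α) (bubbleDenomInvDeriv2 a α t) t := by
  have hP := (bubbleDenom_pos (α := α) ha ht.le).ne'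
  have h : HasDerivAt (bubbleDenomInvDeriv a α) _ t :=
    (((hasDerivAt_rpow_const (p := α) (Or.inl ht.ne')).const_mul (a * (α + 1))).neg).div
      ((hasDerivAt_bubbleDenom ht).pow 2) (pow_ne_zero 2 hP)
  refine h.congr_deriv ?_
  simp only [Pi.neg_apply, bubbleDenomInvDeriv2, rpow_add ht, rpow_sub_one ht.ne', rpow_one]
  field_simp
  ring

theorem bubbleDenom_inv_ode (ha : 0 ≤ a) (ht : 0 < t) :
    8 * bubbleDenomInvDeriv a α t + 4 * t * bubbleDenomInvDeriv2 a α t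
        + 8 * (1 + α) ^ 2 * a * t ^ α * (bubbleDenom a α t)⁻¹ ^ 3
      = 4 * α * (1 + α) * a * t ^ α * (bubbleDenom a α t)⁻¹ ^ 2 := by
  have hP := (bubbleDenom_pos (α := α) ha ht.le).ne'
  rw [bubbleDenomInvDeriv, bubbleDenomInvDeriv2, rpow_sub_one ht.ne', rpow_add ht, rpow_one]
  rw [bubbleDenom, rpow_add ht, rpow_one] at hP ⊢
  field_simp
  ring

end BubbleDenom

section GradientMode

variable {a α : ℝ}

theorem continuous_gradientMode {E : Type*} [NormedAddCommGroup E] [InnerProductSpace ℝ E]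
    (ha : 0 ≤ a) (hα : -1 ≤ α) (w : E) : Continuous (gradientMode a α w) :=
  (continuous_const.inner continuous_id).mul
    (((continuous_bubbleDenom hα).comp (continuous_norm.pow 2)).inv₀
      fun z => (bubbleDenom_pos ha (sq_nonneg ‖z‖)).ne')

theorem laplacian_gradientMode_add_potential_mul (ha : 0 ≤ a) (w : EuclideanSpace ℝ (Fin 2))
    {y : EuclideanSpace ℝ (Fin 2)} (hy : y ≠ 0) :
    Δ (gradientMode a α w) y
        + 8 * (1 + α) ^ 2 * a * (‖y‖ ^ 2) ^ α * (bubbleDenom a α (‖y‖ ^ 2))⁻¹ ^ 2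
          * gradientMode a α w y
      = 4 * α * (1 + α) * a * (‖y‖ ^ 2) ^ α * (bubbleDenom a α (‖y‖ ^ 2))⁻¹ ^ 2 * ⟪w, y⟫ := by
  have ht : 0 < ‖y‖ ^ 2 := by positivity
  have hφ : ∀ᶠ s in 𝓝 (‖y‖ ^ 2), HasDerivAt (fun s => (bubbleDenom a α s)⁻¹)
      (bubbleDenomInvDeriv a α s) s :=
    eventually_of_mem (Ioi_mem_nhds ht) fun s hs => hasDerivAt_inv_bubbleDenom ha hs
  have hΔ := laplacian_inner_mul_comp_normSq w hφ (hasDerivAt_bubbleDenomInvDeriv ha ht)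
  rw [finrank_euclideanSpace_fin] at hΔ
  push_cast at hΔ
  unfold gradientMode
  linear_combination hΔ + ⟪w, y⟫ * bubbleDenom_inv_ode (α := α) ha ht

end GradientMode

theorem stmt9_general (α h₀ ε : ℝ) (hα : -1 < α) (hα0 : α ≠ 0) (hh : 0 < h₀)
    (a : ℝ) (ha : a = h₀ / (8 * (1 + α) ^ 2))
    (v : EuclideanSpace ℝ (Fin 2))
    (g : ℝ → ℝ) (hg : ∀ r, g r = -(2 * (1 + α) / α) * r / (1 + a * r ^ (2 * α + 2)))
    (c₁ U : EuclideanSpace ℝ (Fin 2) → ℝ)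
    (hc₁0 : c₁ 0 = 0)
    (hc₁ : ∀ y, y ≠ 0 → c₁ y = ε * g ‖y‖ * ((inner ℝ v y : ℝ) / ‖y‖))
    (hU : ∀ y, U y = -2 * Real.log (1 + a * ‖y‖ ^ (2 * α + 2))) :
    ContinuousAt c₁ 0 ∧
    ∀ y : EuclideanSpace ℝ (Fin 2), y ≠ 0 →
      lap c₁ y + ‖y‖ ^ (2 * α) * h₀ * Real.exp (U y) * c₁ y
        = -ε * (inner ℝ v y : ℝ) * h₀ * ‖y‖ ^ (2 * α) * Real.exp (U y) := by
  have ha0 : 0 ≤ a := by rw [ha]; positivity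
  have hh₀ : h₀ = 8 * (1 + α) ^ 2 * a := by rw [ha]; field_simp [show 1 + α ≠ 0 by linarith]
  have hbubble (z : EuclideanSpace ℝ (Fin 2)) :
      bubbleDenom a α (‖z‖ ^ 2) = 1 + a * ‖z‖ ^ (2 * α + 2) := by
    rw [bubbleDenom, sq_rpow (norm_nonneg z), mul_add, mul_one]
  have hc₁_eq : c₁ = gradientMode a α ((-(ε * (2 * (1 + α) / α))) • v) := by
    ext z
    rcases eq_or_ne z 0 with rfl | hz
    · simp [hc₁0, gradientMode]
    · have hr := norm_ne_zero_iff.mpr hz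
      rw [hc₁ z hz, hg, gradientMode, real_inner_smul_left, hbubble]
      field_simp
  refine ⟨hc₁_eq ▸ (continuous_gradientMode ha0 hα.le _).continuousAt, fun y hy => ?_⟩
  have hK : 2 * (1 + α) / α * α = 2 * (1 + α) := div_mul_cancel₀ _ hα0
  have hmode :=
    laplacian_gradientMode_add_potential_mul (α := α) ha0 ((-(ε * (2 * (1 + α) / α))) • v) hy
  rw [real_inner_smul_left] at hmode
  rw [lap_eq_laplacian, hc₁_eq, hU, ← hbubble,
    exp_neg_two_mul_log (bubbleDenom_pos ha0 (sq_nonneg ‖y‖)), ← sq_rpow (norm_nonneg y), hh₀]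
  linear_combination hmode
    - 4 * (1 + α) * a * ε * ⟪v, y⟫ * (‖y‖ ^ 2) ^ α * (bubbleDenom a α (‖y‖ ^ 2))⁻¹ ^ 2 * hK

theorem stmt9 (α h₀ ε : ℝ) (hα : -1 < α) (hα0 : α ≠ 0) (hh : 0 < h₀) (hε : 0 < ε)
    (a : ℝ) (ha : a = h₀ / (8 * (1 + α) ^ 2))
    (v : EuclideanSpace ℝ (Fin 2))
    (g : ℝ → ℝ) (hg : ∀ r, g r = -(2 * (1 + α) / α) * r / (1 + a * r ^ (2 * α + 2)))
    (c₁ U : EuclideanSpace ℝ (Fin 2) → ℝ)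
    (hc₁0 : c₁ 0 = 0)
    (hc₁ : ∀ y, y ≠ 0 → c₁ y = ε * g ‖y‖ * ((inner ℝ v y : ℝ) / ‖y‖))
    (hU : ∀ y, U y = -2 * Real.log (1 + a * ‖y‖ ^ (2 * α + 2))) :
    ContinuousAt c₁ 0 ∧
    ∀ y : EuclideanSpace ℝ (Fin 2), y ≠ 0 →
      lap c₁ y + ‖y‖ ^ (2 * α) * h₀ * Real.exp (U y) * c₁ y
        = -ε * (inner ℝ v y : ℝ) * h₀ * ‖y‖ ^ (2 * α) * Real.exp (U y) :=
  stmt9_general α h₀ ε hα hα0 hh a ha v g hg c₁ U hc₁0 hc₁ hU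
end

section
/- For α > -1 with α ∉ ℕ and integer l ≥ 1, any C² solution φ_l of φ_l'' + (1/r)φ_l' + (8(1+α)²r^{2α}e^{U_α} - l²/r²)φ_l = 0 on (0,∞) with lim_{r→0} φ_l(r) = 0 and |φ_l(r)| ≤ C(1+r)^τ for some τ ∈ [0,1) must vanish identically: φ_l ≡ 0. -/
/-!
For solutions of `u'' + u'/r + Q u = 0` the Wronskian `r (u v' - u' v)` is constant. The two explicit
solutions `F± = r ^ (±l) ((±l/β - 1) + 2 / (1 + r ^ (2β)))`, `β = 1 + α`, have Wronskian
`2 l (l² - β²) / β²`, nonzero because `α ∉ ℕ` forces `l ≠ β`; hence every solution is a combination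
`a F₊ + b F₋`. Dividing by `r ^ l` at infinity, the bound `(1 + r) ^ τ` with `τ < 1 ≤ l` forces
`a (l/β - 1) = 0`; multiplying by `r ^ l` at the origin, `φ → 0` forces `b (1 - l/β) = 0`.
-/

open Real Filter Topology Set

namespace LinearizedLiouville

def SolvesRadialEq (Q u u' : ℝ → ℝ) : Prop :=
  ∀ r, 0 < r → HasDerivAt u (u' r) r ∧ HasDerivAt u' (-(u' r / r) - Q r * u r) r

section Wronskian

variable {Q u u' v v' : ℝ → ℝ}

theorem SolvesRadialEq.wronskian_eq (hu : SolvesRadialEq Q u u') (hv : SolvesRadialEq Q v v')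
    {r : ℝ} (hr : 0 < r) :
    r * (u r * v' r - u' r * v r) = u 1 * v' 1 - u' 1 * v 1 := by
  have hderiv : ∀ x, 0 < x →
      HasDerivAt (fun x => x * (u x * v' x - u' x * v x)) 0 x := by
    intro x hx
    obtain ⟨hu₁, hu₂⟩ := hu x hx
    obtain ⟨hv₁, hv₂⟩ := hv x hx
    refine ((hasDerivAt_id' x).fun_mul ((hu₁.fun_mul hv₂).fun_sub
      (hu₂.fun_mul hv₁))).congr_deriv ?_
    field_simp
    ring
  have h := isOpen_Ioi.is_const_of_deriv_eq_zero isPreconnected_Ioi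
    (fun x hx => (hderiv x hx).differentiableAt.differentiableWithinAt)
    (fun x hx => (hderiv x hx).deriv) (mem_Ioi.2 hr) (mem_Ioi.2 one_pos)
  simpa using h

theorem SolvesRadialEq.exists_eq_add {φ φ' : ℝ → ℝ} (hφ : SolvesRadialEq Q φ φ')
    (hu : SolvesRadialEq Q u u') (hv : SolvesRadialEq Q v v')
    (hW : u 1 * v' 1 - u' 1 * v 1 ≠ 0) :
    ∃ a b : ℝ, ∀ r, 0 < r → φ r = a * u r + b * v r := by
  refine ⟨(φ 1 * v' 1 - φ' 1 * v 1) / (u 1 * v' 1 - u' 1 * v 1),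
    -(φ 1 * u' 1 - φ' 1 * u 1) / (u 1 * v' 1 - u' 1 * v 1), fun r hr => ?_⟩
  have hφv := hφ.wronskian_eq hv hr
  have hφu := hφ.wronskian_eq hu hr
  have huv := hu.wronskian_eq hv hr
  rw [div_mul_eq_mul_div, div_mul_eq_mul_div, ← add_div, eq_div_iff hW]
  linear_combination u r * hφv - v r * hφu - φ r * huv

end Wronskian

theorem solvesRadialEq_of_contDiffOn {Q φ : ℝ → ℝ} (hφ : ContDiffOn ℝ 2 φ (Ioi 0))
    (heq : ∀ r, 0 < r → deriv (deriv φ) r + (1 / r) * deriv φ r + Q r * φ r = 0) :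
    SolvesRadialEq Q φ (deriv φ) := by
  intro r hr
  have hφ' : ContDiffOn ℝ 1 (deriv φ) (Ioi 0) := hφ.deriv_of_isOpen isOpen_Ioi (by norm_num)
  have hnhds : Ioi (0 : ℝ) ∈ 𝓝 r := isOpen_Ioi.mem_nhds hr
  refine ⟨((hφ.differentiableOn (by norm_num)).differentiableAt hnhds).hasDerivAt, ?_⟩
  refine ((hφ'.differentiableOn one_ne_zero).differentiableAt hnhds).hasDerivAt.congr_deriv ?_
  linear_combination heq r hr

section FundamentalSolutions

variable (c β : ℝ)

noncomputable def profile (s : ℝ) : ℝ := c / β - 1 + 2 / (1 + s)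

/-- With `β = 1 + α`, `fundSol l β` is the paper's `F₁,ₗ` and `fundSol (-l) β` is `-F₂,ₗ`. -/
noncomputable def fundSol (r : ℝ) : ℝ := r ^ c * profile c β (r ^ (2 * β))

noncomputable def fundSolDeriv (r : ℝ) : ℝ :=
  r ^ (c - 1) * (c * profile c β (r ^ (2 * β)) - 4 * β * r ^ (2 * β) / (1 + r ^ (2 * β)) ^ 2)

noncomputable def potential (r : ℝ) : ℝ :=
  8 * β ^ 2 * r ^ (2 * β) / (r ^ 2 * (1 + r ^ (2 * β)) ^ 2) - c ^ 2 / r ^ 2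

theorem potential_neg : potential (-c) β = potential c β := by
  ext r; simp [potential]

theorem hasDerivAt_rpow_mul_comp_rpow {g : ℝ → ℝ} {g' r : ℝ} (hr : 0 < r)
    (hg : HasDerivAt g g' (r ^ (2 * β))) :
    HasDerivAt (fun x => x ^ c * g (x ^ (2 * β)))
      (r ^ (c - 1) * (c * g (r ^ (2 * β)) + 2 * β * r ^ (2 * β) * g')) r := by
  have hpow : ∀ e : ℝ, HasDerivAt (fun x : ℝ => x ^ e) (e * r ^ (e - 1)) r :=
    fun e => hasDerivAt_rpow_const (Or.inl hr.ne')
  refine ((hpow c).fun_mul (hg.comp r (hpow (2 * β)))).congr_deriv ?_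
  rw [Function.comp_apply, rpow_sub_one hr.ne', rpow_sub_one hr.ne']
  ring

theorem hasDerivAt_profile {s : ℝ} (hs : 1 + s ≠ 0) :
    HasDerivAt (profile c β) (-2 / (1 + s) ^ 2) s := by
  have := (((hasDerivAt_id' s).const_add 1).inv hs).const_mul 2 |>.const_add (c / β - 1)
  refine this.congr_deriv ?_
  field_simp

theorem hasDerivAt_fundSol {r : ℝ} (hr : 0 < r) :
    HasDerivAt (fundSol c β) (fundSolDeriv c β r) r := by
  have hs : 1 + r ^ (2 * β) ≠ 0 := by positivity
  refine (hasDerivAt_rpow_mul_comp_rpow c β hr (hasDerivAt_profile c β hs)).congr_deriv ?_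
  simp only [fundSolDeriv]
  ring

theorem hasDerivAt_fundSolDeriv (hβ : β ≠ 0) {r : ℝ} (hr : 0 < r) :
    HasDerivAt (fundSolDeriv c β)
      (-(fundSolDeriv c β r / r) - potential c β r * fundSol c β r) r := by
  have hs : 1 + r ^ (2 * β) ≠ 0 := by positivity
  have hg : HasDerivAt (fun s => c * profile c β s - 4 * β * s / (1 + s) ^ 2)
      (c * (-2 / (1 + r ^ (2 * β)) ^ 2) - 4 * β * (1 - r ^ (2 * β)) / (1 + r ^ (2 * β)) ^ 3)
      (r ^ (2 * β)) := by
    have hq := ((hasDerivAt_id' _).const_mul (4 * β)).fun_div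
      (((hasDerivAt_id' _).const_add 1).fun_pow 2) (pow_ne_zero 2 hs)
    refine (((hasDerivAt_profile c β hs).const_mul c).fun_sub hq).congr_deriv ?_
    field_simp
    ring
  refine (hasDerivAt_rpow_mul_comp_rpow (c - 1) β hr hg).congr_deriv ?_
  simp only [fundSolDeriv, fundSol, potential, profile]
  rw [rpow_sub_one hr.ne', rpow_sub_one hr.ne']
  field_simp
  ring

theorem solvesRadialEq_fundSol (hβ : β ≠ 0) :
    SolvesRadialEq (potential c β) (fundSol c β) (fundSolDeriv c β) :=
  fun _ hr => ⟨hasDerivAt_fundSol c β hr, hasDerivAt_fundSolDeriv c β hβ hr⟩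

theorem fundSol_wronskian_one_ne_zero (hβ : 0 < β) (hc : 0 < c) (hcβ : c ≠ β) :
    fundSol c β 1 * fundSolDeriv (-c) β 1 - fundSolDeriv c β 1 * fundSol (-c) β 1 ≠ 0 := by
  have hW : fundSol c β 1 * fundSolDeriv (-c) β 1 - fundSolDeriv c β 1 * fundSol (-c) β 1
      = 2 * c * ((c - β) * (c + β)) / β ^ 2 := by
    simp only [fundSol, fundSolDeriv, profile, one_rpow]
    field_simp
    ring
  rw [hW]
  have : c - β ≠ 0 := sub_ne_zero.2 hcβ
  positivity

theorem potential_one_add {α r : ℝ} (hr : 0 < r) :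
    potential c (1 + α) r
      = 8 * (1 + α) ^ 2 * r ^ (2 * α) * exp (-2 * log (1 + r ^ (2 * α + 2))) - c ^ 2 / r ^ 2 := by
  have hexp : exp (-2 * log (1 + r ^ (2 * (1 + α)))) = ((1 + r ^ (2 * (1 + α))) ^ 2)⁻¹ := by
    rw [mul_comm, ← rpow_def_of_pos (by positivity), rpow_neg (by positivity), rpow_two]
  have hpow : r ^ (2 * (1 + α)) = r ^ (2 * α) * r ^ 2 := by
    rw [← rpow_two, ← rpow_add hr]
    ring_nf
  rw [show 2 * α + 2 = 2 * (1 + α) by ring, hexp, potential, hpow]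
  field_simp

theorem tendsto_profile_atTop : Tendsto (profile c β) atTop (𝓝 (c / β - 1)) := by
  have h : Tendsto (fun s : ℝ => 2 / (1 + s)) atTop (𝓝 0) :=
    tendsto_const_nhds.div_atTop (tendsto_atTop_add_const_left _ 1 tendsto_id)
  unfold profile
  simpa using h.const_add (c / β - 1)

theorem tendsto_profile_zero : Tendsto (profile c β) (𝓝 0) (𝓝 (c / β + 1)) := by
  have h : ContinuousAt (profile c β) 0 := by
    unfold profile
    fun_prop (disch := norm_num)
  convert h.tendsto using 2
  simp only [profile]
  ring

end FundamentalSolutions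

theorem tendsto_rpow_nhdsGT_zero {y : ℝ} (hy : 0 < y) :
    Tendsto (fun x : ℝ => x ^ y) (𝓝[>] 0) (𝓝 0) := by
  have h := (continuousAt_rpow_const 0 y (Or.inr hy.le)).tendsto
  rw [zero_rpow hy.ne'] at h
  exact h.mono_left nhdsWithin_le_nhds

theorem tendsto_div_rpow_atTop_of_abs_le {φ : ℝ → ℝ} {C τ d : ℝ} (hτ : 0 ≤ τ) (hτd : τ < d)
    (hφ : ∀ r, 0 < r → |φ r| ≤ C * (1 + r) ^ τ) :
    Tendsto (fun r => φ r / r ^ d) atTop (𝓝 0) := by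
  have hdecay : Tendsto (fun r : ℝ => |C| * 2 ^ τ * r ^ (τ - d)) atTop (𝓝 0) := by
    simpa [neg_sub] using (tendsto_rpow_neg_atTop (sub_pos.2 hτd)).const_mul (|C| * 2 ^ τ)
  refine squeeze_zero_norm' ?_ hdecay
  filter_upwards [eventually_ge_atTop 1] with r hr
  have hr0 : 0 < r := by linarith
  rw [norm_div, norm_of_nonneg (rpow_pos_of_pos hr0 d).le, rpow_sub hr0, mul_div_assoc',
    div_le_div_iff_of_pos_right (rpow_pos_of_pos hr0 d)]
  calc ‖φ r‖ ≤ |C| * (1 + r) ^ τ := (hφ r hr0).trans (by gcongr; exact le_abs_self C)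
    _ ≤ |C| * (2 * r) ^ τ := by gcongr; linarith
    _ = |C| * 2 ^ τ * r ^ τ := by rw [mul_rpow (by norm_num) hr0.le]; ring

section Asymptotics

variable {c β : ℝ}

theorem eq_zero_of_tendsto_div_rpow_atTop (hβ : 0 < β) (hc : 0 < c) (hcβ : c ≠ β)
    {φ : ℝ → ℝ} {a b : ℝ} (hφ : ∀ r, 0 < r → φ r = a * fundSol c β r + b * fundSol (-c) β r)
    (hlim : Tendsto (fun r => φ r / r ^ c) atTop (𝓝 0)) : a = 0 := by
  have hs := tendsto_rpow_atTop (by positivity : 0 < 2 * β)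
  have hcomb := ((tendsto_profile_atTop c β).comp hs).const_mul a |>.add
    (((tendsto_rpow_neg_atTop (by positivity : 0 < 2 * c)).mul
      ((tendsto_profile_atTop (-c) β).comp hs)).const_mul b)
  have hlim' : Tendsto (fun r => φ r / r ^ c) atTop (𝓝 (a * (c / β - 1))) := by
    rw [show a * (c / β - 1) = a * (c / β - 1) + b * (0 * (-c / β - 1)) by ring]
    refine hcomb.congr' ?_
    filter_upwards [eventually_gt_atTop 0] with r hr
    have hneg : r ^ (-c) = r ^ (-(2 * c)) * r ^ c := by rw [← rpow_add hr]; ring_nf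
    rw [Function.comp_apply, Function.comp_apply, hφ r hr, fundSol, fundSol, hneg]
    field_simp
  have hν : c / β - 1 ≠ 0 := by
    rw [sub_ne_zero, ne_eq, div_eq_one_iff_eq hβ.ne']
    exact hcβ
  simpa [hν] using tendsto_nhds_unique hlim' hlim

theorem eq_zero_of_tendsto_mul_rpow_nhdsGT_zero (hβ : 0 < β) (hc : 0 < c) (hcβ : c ≠ β)
    {φ : ℝ → ℝ} {a b : ℝ} (hφ : ∀ r, 0 < r → φ r = a * fundSol c β r + b * fundSol (-c) β r)
    (hlim : Tendsto (fun r => φ r * r ^ c) (𝓝[>] 0) (𝓝 0)) : b = 0 := by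
  have hs := tendsto_rpow_nhdsGT_zero (by positivity : 0 < 2 * β)
  have hcomb := (((tendsto_rpow_nhdsGT_zero (by positivity : 0 < 2 * c)).mul
      ((tendsto_profile_zero c β).comp hs)).const_mul a).add
    (((tendsto_profile_zero (-c) β).comp hs).const_mul b)
  have hlim' : Tendsto (fun r => φ r * r ^ c) (𝓝[>] 0) (𝓝 (b * (-c / β + 1))) := by
    rw [show b * (-c / β + 1) = a * (0 * (c / β + 1)) + b * (-c / β + 1) by ring]
    refine hcomb.congr' ?_
    filter_upwards [self_mem_nhdsWithin] with r hr
    have hpos : r ^ (2 * c) = r ^ c * r ^ c := by rw [← rpow_add hr]; ring_nf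
    have hneg : r ^ (-c) * r ^ c = 1 := by rw [← rpow_add hr]; simp
    rw [Function.comp_apply, Function.comp_apply, hφ r hr, fundSol, fundSol, hpos]
    linear_combination -(b * profile (-c) β (r ^ (2 * β))) * hneg
  have hν : -c / β + 1 ≠ 0 := by
    rw [← sub_neg_eq_add, sub_ne_zero, ne_eq, div_eq_iff hβ.ne']
    intro h
    exact hcβ (by linarith)
  simpa [hν] using tendsto_nhds_unique hlim' hlim

end Asymptotics

end LinearizedLiouville

open LinearizedLiouville

theorem stmt11 (α : ℝ) (hα : -1 < α) (hαn : ∀ n : ℕ, α ≠ n)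
    (l : ℕ) (hl : 1 ≤ l)
    (φ U : ℝ → ℝ)
    (hφ : ContDiffOn ℝ 2 φ (Set.Ioi 0))
    (hU : ∀ r, U r = -2 * Real.log (1 + r ^ (2 * α + 2)))
    (heq : ∀ r : ℝ, 0 < r →
      deriv (deriv φ) r + (1 / r) * deriv φ r
        + (8 * (1 + α) ^ 2 * r ^ (2 * α) * Real.exp (U r) - (l : ℝ) ^ 2 / r ^ 2) * φ r = 0)
    (h0 : Filter.Tendsto φ (nhdsWithin 0 (Set.Ioi 0)) (nhds 0))
    (C τ : ℝ) (hτ0 : 0 ≤ τ) (hτ1 : τ < 1)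
    (hbound : ∀ r : ℝ, 0 < r → |φ r| ≤ C * (1 + r) ^ τ) :
    ∀ r : ℝ, 0 < r → φ r = 0 := by
  have hβ : 0 < 1 + α := by linarith
  have hl₀ : (0 : ℝ) < l := by exact_mod_cast hl
  have hlβ : (l : ℝ) ≠ 1 + α := fun h => hαn (l - 1) (by push_cast [hl]; linarith)
  have hsol : SolvesRadialEq (potential l (1 + α)) φ (deriv φ) :=
    solvesRadialEq_of_contDiffOn hφ fun r hr => by
      rw [potential_one_add _ hr, ← hU r]
      exact heq r hr
  obtain ⟨a, b, hab⟩ := hsol.exists_eq_add (solvesRadialEq_fundSol _ _ hβ.ne')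
    (potential_neg (l : ℝ) (1 + α) ▸ solvesRadialEq_fundSol _ _ hβ.ne')
    (fundSol_wronskian_one_ne_zero _ _ hβ hl₀ hlβ)
  have ha : a = 0 := eq_zero_of_tendsto_div_rpow_atTop hβ hl₀ hlβ hab
    (tendsto_div_rpow_atTop_of_abs_le hτ0 (hτ1.trans_le (by exact_mod_cast hl)) hbound)
  have hb : b = 0 := eq_zero_of_tendsto_mul_rpow_nhdsGT_zero hβ hl₀ hlβ hab
    (by simpa using h0.mul (tendsto_rpow_nhdsGT_zero hl₀))
  intro r hr
  simp [hab r hr, ha, hb]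
end

section
/- For h₀ > 0, the functions f₁(r) = r/(1+r²) and f₂(r) = -1/(2r(1+r²)) + 2r·log r/(1+r²) + r³/(2(1+r²)) are two linearly independent solutions of the ODE f'' + (1/r)f' + (8·e^{U(r)} - 1/r²)f = 0 on (0,∞), where U(r) = -2·log(1+r²); their Wronskian satisfies W(f₁,f₂)(r) = f₁(r)f₂'(r) - f₁'(r)f₂(r) = 1/r. -/
/-!
The kernel `f₁ = r / (1 + r²) = -U'/4` comes from translating the bubble. The second solution is
found by reduction of order: for `y'' + y'/r + q y = 0` the Wronskian of two solutions is `c/r`,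
so `f₂ = f₁ g` with `g' = 1 / (r f₁²) = (1 + r²)² / r³`, i.e. `g = -1/(2r²) + 2 log r + r²/2`.
Then `W(f₁, f₂) = f₁² g' = 1/r`, and a nonvanishing Wronskian forces linear independence.
-/

open Real Filter Topology

noncomputable def wronskian (f g : ℝ → ℝ) (x : ℝ) : ℝ := f x * deriv g x - deriv f x * g x

section ReductionOfOrder

variable {f f' f'' g g' g'' : ℝ → ℝ} {s : Set ℝ}

lemma deriv_deriv_eq_of_hasDerivAt (hs : IsOpen s) (hf : ∀ x ∈ s, HasDerivAt f (f' x) x)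
    (hf' : ∀ x ∈ s, HasDerivAt f' (f'' x) x) {x : ℝ} (hx : x ∈ s) :
    deriv (deriv f) x = f'' x := by
  have h : deriv f =ᶠ[𝓝 x] f' :=
    eventually_of_mem (hs.mem_nhds hx) fun y hy => (hf y hy).deriv
  rw [h.deriv_eq, (hf' x hx).deriv]

lemma wronskian_self_mul {x : ℝ} (hf : HasDerivAt f (f' x) x) (hg : HasDerivAt g (g' x) x) :
    wronskian f (f * g) x = f x ^ 2 * g' x := by
  rw [wronskian, (hf.mul hg).deriv, hf.deriv, Pi.mul_apply]
  ring

theorem ode_mul_of_reduction_of_order {q : ℝ → ℝ} (hs : IsOpen s)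
    (hf : ∀ x ∈ s, HasDerivAt f (f' x) x) (hf' : ∀ x ∈ s, HasDerivAt f' (f'' x) x)
    (hg : ∀ x ∈ s, HasDerivAt g (g' x) x) (hg' : ∀ x ∈ s, HasDerivAt g' (g'' x) x)
    (hode : ∀ x ∈ s, f'' x + 1 / x * f' x + q x * f x = 0)
    (hW : ∀ x ∈ s, x * f x ^ 2 * g' x = 1) {x : ℝ} (hx : x ∈ s) :
    deriv (deriv (f * g)) x + 1 / x * deriv (f * g) x + q x * (f * g) x = 0 := by
  have hfg : ∀ y ∈ s, HasDerivAt (f * g) (f' y * g y + f y * g' y) y :=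
    fun y hy => (hf y hy).mul (hg y hy)
  have hfg' : ∀ y ∈ s, HasDerivAt (fun y => f' y * g y + f y * g' y)
      (f'' y * g y + f' y * g' y + (f' y * g' y + f y * g'' y)) y :=
    fun y hy => ((hf' y hy).mul (hg y hy)).add ((hf y hy).mul (hg' y hy))
  -- differentiating the constant `x f² g' = 1`
  have hW' : 1 * f x ^ 2 * g' x + x * (2 * f x * f' x) * g' x + x * f x ^ 2 * g'' x = 0 := by
    have hconst : (fun y => y * f y ^ 2 * g' y) =ᶠ[𝓝 x] fun _ => 1 :=
      eventually_of_mem (hs.mem_nhds hx) hW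
    have hd := (((hasDerivAt_id x).mul ((hf x hx).pow 2)).mul (hg' x hx))
    have h0 := hd.unique ((hasDerivAt_const x (1 : ℝ)).congr_of_eventuallyEq hconst)
    simp only [Pi.mul_apply, Pi.pow_apply, id] at h0
    linear_combination h0
  have hx0 : x ≠ 0 := by rintro rfl; simpa using hW 0 hx
  have hfx : f x ≠ 0 := by intro h; simpa [h] using hW x hx
  rw [deriv_deriv_eq_of_hasDerivAt hs hfg hfg' hx, (hfg x hx).deriv, Pi.mul_apply]
  apply mul_left_cancel₀ (mul_ne_zero hx0 hfx)
  linear_combination (x * f x * g x) * hode x hx + hW' + f x ^ 2 * g' x * mul_one_div_cancel hx0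

end ReductionOfOrder

lemma eq_zero_of_wronskian_ne_zero {f g : ℝ → ℝ} {s : Set ℝ} (hs : IsOpen s) {x : ℝ}
    (hx : x ∈ s) (hf : DifferentiableAt ℝ f x) (hg : DifferentiableAt ℝ g x)
    (hW : wronskian f g x ≠ 0)
    {a b : ℝ} (h : ∀ y ∈ s, a * f y + b * g y = 0) : a = 0 ∧ b = 0 := by
  have hd : a * deriv f x + b * deriv g x = 0 := by
    have hzero : (fun y => a * f y + b * g y) =ᶠ[𝓝 x] fun _ => 0 :=
      eventually_of_mem (hs.mem_nhds hx) h
    have hd := (hf.hasDerivAt.const_mul a).add (hg.hasDerivAt.const_mul b)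
    exact hd.unique ((hasDerivAt_const x (0 : ℝ)).congr_of_eventuallyEq hzero)
  have hv := h x hx
  unfold wronskian at hW
  constructor
  · refine (mul_eq_zero.mp ?_).resolve_right hW
    linear_combination deriv g x * hv - g x * hd
  · refine (mul_eq_zero.mp ?_).resolve_right hW
    linear_combination f x * hd - deriv f x * hv

namespace BubbleModeOne

noncomputable def potential (x : ℝ) : ℝ := 8 * exp (-2 * log (1 + x ^ 2)) - 1 / x ^ 2

noncomputable def kernel (x : ℝ) : ℝ := x / (1 + x ^ 2)

noncomputable def kernel' (x : ℝ) : ℝ := (1 - x ^ 2) / (1 + x ^ 2) ^ 2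

noncomputable def kernel'' (x : ℝ) : ℝ := (2 * x ^ 3 - 6 * x) / (1 + x ^ 2) ^ 3

noncomputable def factor (x : ℝ) : ℝ := -1 / (2 * x ^ 2) + 2 * log x + x ^ 2 / 2

noncomputable def factor' (x : ℝ) : ℝ := (1 + x ^ 2) ^ 2 / x ^ 3

noncomputable def factor'' (x : ℝ) : ℝ := (1 + x ^ 2) * (x ^ 2 - 3) / x ^ 4

lemma exp_neg_two_mul_log_one_add_sq (x : ℝ) :
    exp (-2 * log (1 + x ^ 2)) = 1 / (1 + x ^ 2) ^ 2 := by
  rw [neg_mul, exp_neg, ← log_rpow (by positivity), exp_log (by positivity), one_div]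
  norm_cast

lemma hasDerivAt_one_add_sq (x : ℝ) : HasDerivAt (fun x : ℝ => 1 + x ^ 2) (2 * x) x := by
  simpa using (hasDerivAt_pow 2 x).const_add 1

lemma hasDerivAt_kernel (x : ℝ) : HasDerivAt kernel (kernel' x) x := by
  have h : (1 : ℝ) + x ^ 2 ≠ 0 := by positivity
  refine ((hasDerivAt_id x).div (hasDerivAt_one_add_sq x) h).congr_deriv ?_
  simp only [kernel', id]
  field_simp
  ring

lemma hasDerivAt_kernel' (x : ℝ) : HasDerivAt kernel' (kernel'' x) x := by
  have h : (1 : ℝ) + x ^ 2 ≠ 0 := by positivity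
  have hnum : HasDerivAt (fun x : ℝ => 1 - x ^ 2) (-(2 * x)) x := by
    simpa using (hasDerivAt_pow 2 x).const_sub 1
  refine (hnum.div ((hasDerivAt_one_add_sq x).pow 2) (pow_ne_zero 2 h)).congr_deriv ?_
  simp only [kernel'', Pi.pow_apply]
  field_simp
  ring

lemma hasDerivAt_factor {x : ℝ} (hx : x ≠ 0) : HasDerivAt factor (factor' x) x := by
  have hA := (hasDerivAt_const x (-1 : ℝ)).div ((hasDerivAt_pow 2 x).const_mul 2)
    (by positivity : 2 * x ^ 2 ≠ 0)
  have hB := (hasDerivAt_log hx).const_mul 2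
  have hC := (hasDerivAt_pow 2 x).div_const 2
  refine ((hA.add hB).add hC).congr_deriv ?_
  rw [factor']
  field_simp
  ring

lemma hasDerivAt_factor' {x : ℝ} (hx : x ≠ 0) : HasDerivAt factor' (factor'' x) x := by
  refine (((hasDerivAt_one_add_sq x).pow 2).div (hasDerivAt_pow 3 x)
    (pow_ne_zero 3 hx)).congr_deriv ?_
  simp only [factor'', Pi.pow_apply]
  field_simp
  ring

lemma kernel_ode {x : ℝ} (hx : x ≠ 0) :
    kernel'' x + 1 / x * kernel' x + potential x * kernel x = 0 := by
  have h : (1 : ℝ) + x ^ 2 ≠ 0 := by positivity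
  rw [potential, exp_neg_two_mul_log_one_add_sq, kernel, kernel', kernel'']
  field_simp
  ring

lemma mul_kernel_sq_mul_factor' {x : ℝ} (hx : x ≠ 0) : x * kernel x ^ 2 * factor' x = 1 := by
  have h : (1 : ℝ) + x ^ 2 ≠ 0 := by positivity
  rw [kernel, factor']
  field_simp

lemma kernel_mul_factor : kernel * factor = fun x => -1 / (2 * x * (1 + x ^ 2))
    + 2 * x * log x / (1 + x ^ 2) + x ^ 3 / (2 * (1 + x ^ 2)) := by
  funext x
  rcases eq_or_ne x 0 with rfl | hx
  · simp [kernel]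
  have h : (1 : ℝ) + x ^ 2 ≠ 0 := by positivity
  rw [Pi.mul_apply, kernel, factor]
  field_simp

end BubbleModeOne

open BubbleModeOne

theorem stmt12 (f₁ f₂ U : ℝ → ℝ)
    (hf₁ : ∀ r, f₁ r = r / (1 + r ^ 2))
    (hf₂ : ∀ r, f₂ r = -1 / (2 * r * (1 + r ^ 2)) + 2 * r * Real.log r / (1 + r ^ 2)
        + r ^ 3 / (2 * (1 + r ^ 2)))
    (hU : ∀ r, U r = -2 * Real.log (1 + r ^ 2)) :
    (∀ r : ℝ, 0 < r →
      deriv (deriv f₁) r + (1 / r) * deriv f₁ r + (8 * Real.exp (U r) - 1 / r ^ 2) * f₁ r = 0) ∧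
    (∀ r : ℝ, 0 < r →
      deriv (deriv f₂) r + (1 / r) * deriv f₂ r + (8 * Real.exp (U r) - 1 / r ^ 2) * f₂ r = 0) ∧
    (∀ r : ℝ, 0 < r → f₁ r * deriv f₂ r - deriv f₁ r * f₂ r = 1 / r) ∧
    (∀ c₁ c₂ : ℝ, (∀ r : ℝ, 0 < r → c₁ * f₁ r + c₂ * f₂ r = 0) → c₁ = 0 ∧ c₂ = 0) := by
  obtain rfl : f₁ = kernel := funext hf₁
  obtain rfl : f₂ = kernel * factor := (funext hf₂).trans kernel_mul_factor.symm
  obtain rfl : U = fun r => -2 * log (1 + r ^ 2) := funext hU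
  have hs : IsOpen (Set.Ioi (0 : ℝ)) := isOpen_Ioi
  have hW : ∀ r : ℝ, 0 < r → wronskian kernel (kernel * factor) r = 1 / r := fun r hr => by
    rw [wronskian_self_mul (hasDerivAt_kernel r) (hasDerivAt_factor hr.ne')]
    exact eq_one_div_of_mul_eq_one_right ((mul_assoc _ _ _).symm.trans
      (mul_kernel_sq_mul_factor' hr.ne'))
  refine ⟨fun r hr => ?_, fun r hr => ?_, hW, fun c₁ c₂ h => ?_⟩
  · rw [deriv_deriv_eq_of_hasDerivAt hs (fun x _ => hasDerivAt_kernel x)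
      (fun x _ => hasDerivAt_kernel' x) hr, (hasDerivAt_kernel r).deriv]
    exact kernel_ode hr.ne'
  · exact ode_mul_of_reduction_of_order (q := potential) hs (fun x _ => hasDerivAt_kernel x)
      (fun x _ => hasDerivAt_kernel' x) (fun x hx => hasDerivAt_factor (ne_of_gt hx))
      (fun x hx => hasDerivAt_factor' (ne_of_gt hx)) (fun x hx => kernel_ode (ne_of_gt hx))
      (fun x hx => mul_kernel_sq_mul_factor' (ne_of_gt hx)) hr
  · exact eq_zero_of_wronskian_ne_zero hs (Set.mem_Ioi.mpr one_pos)
      (hasDerivAt_kernel 1).differentiableAt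
      ((hasDerivAt_kernel 1).mul (hasDerivAt_factor one_ne_zero)).differentiableAt
      (by rw [hW 1 one_pos]; norm_num) h
end

section
/- For α > -1, h₀ > 0, a = h₀/(8(1+α)²), λ ∈ ℝ and τ > 0, one has ∫_{B_τ} h₀·|x|^{2α}·e^{λ}/(1 + a·e^{λ}·|x|^{2α+2})² dx = 8π(1+α)·(1 - e^{-λ}/(e^{-λ} + a·τ^{2α+2})). -/
/-!
In polar coordinates the integral becomes `2π ∫₀^τ r f(r) dr`. With `p = 2α + 2` and
`b = a e^λ`, the radial integrand `r f(r)` is `h₀ e^λ / p` times the derivative of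
`r^p / (1 + b r^p)`, so the integral is `2π h₀ e^λ τ^p / (p (1 + b τ^p))`; the choice
`h₀ = 8 (1 + α)² a` turns this into `8π(1 + α) b τ^p / (1 + b τ^p)`.
-/

open Real MeasureTheory Set Metric

theorem integral_ball_fun_norm_fin_two {F : Type*} [NormedAddCommGroup F] [NormedSpace ℝ F]
    (f : ℝ → F) {τ : ℝ} (hτ : 0 ≤ τ) :
    ∫ x in ball (0 : EuclideanSpace ℝ (Fin 2)) τ, f ‖x‖ = (2 * π) • ∫ r in 0..τ, r • f r := by
  have hball : (ball (0 : EuclideanSpace ℝ (Fin 2)) τ).indicator (fun x ↦ f ‖x‖)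
      = fun x ↦ (Iio τ).indicator f ‖x‖ := by
    ext x
    simp only [indicator, mem_ball_zero_iff, mem_Iio]
  have hradial : (fun r : ℝ ↦ r ^ (2 - 1) • (Iio τ).indicator f r)
      = (Iio τ).indicator (fun r ↦ r • f r) := by
    ext r
    rw [indicator_smul_apply, pow_one]
  rw [← integral_indicator measurableSet_ball, hball, integral_fun_norm_addHaar,
    finrank_euclideanSpace_fin, measureReal_def, EuclideanSpace.volume_ball_fin_two, hradial,
    setIntegral_indicator measurableSet_Iio, Ioi_inter_Iio, intervalIntegral.integral_of_le hτ,
    integral_Ioc_eq_integral_Ioo]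
  simp only [ENNReal.ofReal_one, one_pow, one_mul, ENNReal.toReal_ofReal pi_nonneg]
  rw [mul_smul, ← Nat.cast_smul_eq_nsmul ℝ, Nat.cast_ofNat]

theorem hasDerivAt_rpow_div_one_add_mul_rpow {p b r : ℝ} (hb : 0 ≤ b) (hr : 0 < r) :
    HasDerivAt (fun r ↦ r ^ p / (1 + b * r ^ p)) (p * r ^ (p - 1) / (1 + b * r ^ p) ^ 2) r := by
  have hpow := hasDerivAt_rpow_const (p := p) (Or.inl hr.ne')
  have hden : 1 + b * r ^ p ≠ 0 := by positivity
  refine (hpow.div ((hpow.const_mul b).const_add 1) hden).congr_deriv ?_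
  ring

theorem integral_mul_rpow_sub_one_div_one_add_mul_rpow_sq {p b τ : ℝ} (hp : 0 < p) (hb : 0 ≤ b)
    (hτ : 0 ≤ τ) :
    ∫ r in 0..τ, p * r ^ (p - 1) / (1 + b * r ^ p) ^ 2 = τ ^ p / (1 + b * τ ^ p) := by
  have hcont : ContinuousOn (fun r ↦ r ^ p / (1 + b * r ^ p)) (Icc 0 τ) := by
    have hpow : Continuous fun r : ℝ ↦ r ^ p := continuous_id.rpow_const fun _ ↦ Or.inr hp.le
    exact hpow.continuousOn.div (continuousOn_const.add (continuousOn_const.mul hpow.continuousOn))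
      fun r hr ↦ by have := hr.1; positivity
  have hderiv : ∀ r ∈ Ioo 0 τ, HasDerivAt (fun r ↦ r ^ p / (1 + b * r ^ p))
      (p * r ^ (p - 1) / (1 + b * r ^ p) ^ 2) r :=
    fun r hr ↦ hasDerivAt_rpow_div_one_add_mul_rpow hb hr.1
  have hnonneg : ∀ r ∈ Ioo 0 τ, 0 ≤ p * r ^ (p - 1) / (1 + b * r ^ p) ^ 2 :=
    fun r hr ↦ by have := hr.1; positivity
  -- For `p < 1` the integrand is unbounded at `0`; integrability comes from its sign.
  rw [intervalIntegral.integral_eq_sub_of_hasDerivAt_of_le hτ hcont hderiv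
    ((intervalIntegrable_iff_integrableOn_Ioc_of_le hτ).2
      (intervalIntegral.integrableOn_deriv_of_nonneg hcont hderiv hnonneg)), zero_rpow hp.ne']
  simp

theorem stmt14 (α h₀ lam τ : ℝ) (hα : -1 < α) (hh : 0 < h₀) (hτ : 0 < τ)
    (a : ℝ) (ha : a = h₀ / (8 * (1 + α) ^ 2)) :
    ∫ x in Metric.ball (0 : EuclideanSpace ℝ (Fin 2)) τ,
        h₀ * ‖x‖ ^ (2 * α) * Real.exp lam / (1 + a * Real.exp lam * ‖x‖ ^ (2 * α + 2)) ^ 2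
      = 8 * Real.pi * (1 + α)
          * (1 - Real.exp (-lam) / (Real.exp (-lam) + a * τ ^ (2 * α + 2))) := by
  have hα₁ : α + 1 ≠ 0 := by linarith
  have hb : 0 ≤ a * exp lam := by rw [ha]; positivity
  calc _ = (2 * π) • ∫ r in 0..τ,
        r • (h₀ * r ^ (2 * α) * exp lam / (1 + a * exp lam * r ^ (2 * α + 2)) ^ 2) :=
        integral_ball_fun_norm_fin_two (F := ℝ) _ hτ.le
    _ = 2 * π * (h₀ * exp lam / (2 * α + 2) * ∫ r in 0..τ,
        (2 * α + 2) * r ^ (2 * α + 2 - 1) / (1 + a * exp lam * r ^ (2 * α + 2)) ^ 2) := by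
      rw [smul_eq_mul]
      congr 1
      rw [← intervalIntegral.integral_const_mul]
      refine intervalIntegral.integral_congr_ae (.of_forall fun r hr ↦ ?_)
      rw [uIoc_of_le hτ.le] at hr
      rw [show 2 * α + 2 - 1 = 2 * α + 1 by ring, rpow_add_one hr.1.ne', smul_eq_mul]
      field_simp
    _ = 2 * π * (h₀ * exp lam / (2 * α + 2)
        * (τ ^ (2 * α + 2) / (1 + a * exp lam * τ ^ (2 * α + 2)))) := by
      rw [integral_mul_rpow_sub_one_div_one_add_mul_rpow_sq (by linarith) hb hτ.le]
    _ = _ := by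
      have hh₀ : h₀ = 8 * (α + 1) ^ 2 * a := by rw [ha, add_comm 1 α]; field_simp
      rw [exp_neg, hh₀]
      field_simp
      ring
end
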